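/- arXiv:1709.09763 — 2 statements merged into one kernel-verified Lean document; each statement's English description precedes it below -/
import Mathlib

section
/- Let N_T ≥ 1 and N_L ≥ 1 be integers and set N := N_T + N_L − 1. Let J > 0 be real, let C : {1, …, N_L} → (0, ∞) be nondecreasing (level costs), and let N_B : {2, …, N_L} → ℕ (numbers of intermediate bridging steps per level, independent of the inverse temperature). Define the cost of an update scheme u by Cost(u) := ∑_{s ITU} J·C(u₂(s)) + ∑_{s LU} J·(C(u₂(s)) + N_B(u₂(s))·(C(u₂(s)) + C(u₂(s) − 1))). Let u* be the Multilevel Bridging scheme given by u*(s) = (s, 1) for s ≤ N_T and u*(s) = (N_T, s − N_T + 1) for N_T < s ≤ N. Then Cost(u*) ≤ Cost(u) for every update scheme u. -/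
/-- An update scheme for MLS²MC with `NT` inverse-temperature updates and `NL`
discretisation levels: a function `u : ℕ → ℕ × ℕ` on `{0, …, NT + NL − 1}` with
`u 0 = (0, 1)`, `u (NT + NL − 1) = (NT, NL)`, and in each step exactly one coordinate
increases by one while the other stays unchanged. -/
def IsUpdateScheme (NT NL : ℕ) (u : ℕ → ℕ × ℕ) : Prop :=
  u 0 = (0, 1) ∧ u (NT + NL - 1) = (NT, NL) ∧
    ∀ s, 1 ≤ s → s ≤ NT + NL - 1 →
      ((u s).1 = (u (s - 1)).1 + 1 ∧ (u s).2 = (u (s - 1)).2) ∨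
      ((u s).2 = (u (s - 1)).2 + 1 ∧ (u s).1 = (u (s - 1)).1)

/-- The cost of an update scheme: each inverse-temperature update at level `ℓ` costs
`J · C ℓ`, and each level update `ℓ − 1 ↦ ℓ` costs
`J · (C ℓ + N_B ℓ · (C ℓ + C (ℓ − 1)))`. -/
noncomputable def SchemeCost (NT NL : ℕ) (J : ℝ) (C : ℕ → ℝ) (NB : ℕ → ℕ)
    (u : ℕ → ℕ × ℕ) : ℝ :=
  ∑ s ∈ Finset.Icc 1 (NT + NL - 1),
    if (u s).2 = (u (s - 1)).2 + 1 then
      J * (C (u s).2 + (NB (u s).2 : ℝ) * (C (u s).2 + C ((u s).2 - 1)))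
    else
      J * C (u s).2

/-- The Multilevel Bridging update scheme: all inverse-temperature updates first
(on level 1), then all level updates. -/
def mlbScheme (NT : ℕ) : ℕ → ℕ × ℕ :=
  fun s => if s ≤ NT then (s, 1) else (NT, s - NT + 1)

namespace MLBAux

lemma step_mono (v : ℕ → ℕ) (n : ℕ)
    (hstep : ∀ s, 1 ≤ s → s ≤ n → v s = v (s - 1) + 1 ∨ v s = v (s - 1)) :
    ∀ t, t ≤ n → ∀ s, s ≤ t → v s ≤ v t := by
  intro t
  induction t with
  | zero => intro _ s hs; interval_cases s; exact le_rfl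
  | succ k ih =>
    intro hk s hs
    rcases Nat.lt_or_ge s (k + 1) with h | h
    · have h1 : v s ≤ v k := ih (by omega) s (by omega)
      rcases hstep (k + 1) (by omega) hk with h2 | h2 <;>
        simp only [Nat.add_sub_cancel] at h2 <;> omega
    · have : s = k + 1 := by omega
      subst this; exact le_rfl

lemma jump_sum (g : ℕ → ℝ) (v : ℕ → ℕ) (n : ℕ)
    (hstep : ∀ s, 1 ≤ s → s ≤ n → v s = v (s - 1) + 1 ∨ v s = v (s - 1)) :
    ∑ s ∈ Finset.Icc 1 n, (if v s = v (s - 1) + 1 then g (v s) else 0)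
      = ∑ ℓ ∈ Finset.Icc (v 0 + 1) (v n), g ℓ := by
  induction n with
  | zero => simp
  | succ k ih =>
    have hstep' : ∀ s, 1 ≤ s → s ≤ k → v s = v (s - 1) + 1 ∨ v s = v (s - 1) :=
      fun s h1 h2 => hstep s h1 (by omega)
    rw [Finset.sum_Icc_succ_top (by omega : 1 ≤ k + 1), ih hstep']
    rcases hstep (k + 1) (by omega) le_rfl with h | h <;>
      simp only [Nat.add_sub_cancel] at h ⊢
    · rw [if_pos h, h]
      have hmono : v 0 ≤ v k := step_mono v (k + 1) hstep k (by omega) 0 (by omega)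
      rw [Finset.sum_Icc_succ_top (by omega : v 0 + 1 ≤ v k + 1)]
    · rw [if_neg (by omega), h, add_zero]

end MLBAux

/-- Proposition: if the level costs are positive and nondecreasing and the number of
intermediate bridging steps per level is independent of the inverse temperature, then the
Multilevel Bridging scheme minimizes the cost among all update schemes. -/
theorem mlb_minimizes_cost (NT NL : ℕ) (hNT : 1 ≤ NT) (hNL : 1 ≤ NL)
    (J : ℝ) (hJ : 0 < J)
    (C : ℕ → ℝ) (hCpos : ∀ ℓ, 1 ≤ ℓ → ℓ ≤ NL → 0 < C ℓ)
    (hCmono : MonotoneOn C (Set.Icc 1 NL))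
    (NB : ℕ → ℕ)
    (u : ℕ → ℕ × ℕ) (hu : IsUpdateScheme NT NL u) :
    SchemeCost NT NL J C NB (mlbScheme NT) ≤ SchemeCost NT NL J C NB u := by
  obtain ⟨hu0, huN, hustep⟩ := hu
  set N := NT + NL - 1 with hN
  set G : ℕ → ℝ := fun ℓ => J * (C ℓ + (NB ℓ : ℝ) * (C ℓ + C (ℓ - 1))) with hG
  set v : ℕ → ℕ := fun s => (u s).2 with hv
  set w : ℕ → ℕ := fun s => (mlbScheme NT s).2 with hw
  have hv0 : v 0 = 1 := by simp [hv, hu0]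
  have hvN : v N = NL := by simp [hv, huN]
  have hvstep : ∀ s, 1 ≤ s → s ≤ N → v s = v (s - 1) + 1 ∨ v s = v (s - 1) := by
    intro s h1 h2
    rcases hustep s h1 h2 with ⟨_, h⟩ | ⟨h, _⟩
    · right; exact h
    · left; exact h
  have hw_le : ∀ s, s ≤ NT → w s = 1 := by intro s hs; simp [hw, mlbScheme, hs]
  have hw_gt : ∀ s, NT < s → w s = s - NT + 1 := by
    intro s hs; simp [hw, mlbScheme, Nat.not_le.mpr hs]
  have hw0 : w 0 = 1 := hw_le 0 (by omega)
  have hwN : w N = NL := by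
    rcases Nat.lt_or_ge NT N with h | h
    · rw [hw_gt N h]; omega
    · rw [hw_le N h]; omega
  have hwjumpgt : ∀ s, NT < s → w s = w (s - 1) + 1 := by
    intro s hs
    by_cases hs1 : s - 1 ≤ NT
    · rw [hw_gt s hs, hw_le (s - 1) hs1]; omega
    · rw [hw_gt s hs, hw_gt (s - 1) (by omega)]; omega
  have hwstep : ∀ s, 1 ≤ s → s ≤ N → w s = w (s - 1) + 1 ∨ w s = w (s - 1) := by
    intro s h1 _
    by_cases hs : s ≤ NT
    · right; rw [hw_le s hs, hw_le (s - 1) (by omega)]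
    · left; exact hwjumpgt s (by omega)
  have hwnj : ∀ s, 1 ≤ s → ¬(w s = w (s - 1) + 1) → w s = 1 := by
    intro s h1 h3
    by_cases hs : s ≤ NT
    · exact hw_le s hs
    · exact absurd (hwjumpgt s (by omega)) h3
  -- split the cost into level-update part + inverse-temperature part
  have costs : ∀ x : ℕ → ℕ,
      (∑ s ∈ Finset.Icc 1 N, if x s = x (s - 1) + 1 then G (x s) else J * C (x s))
        = (∑ s ∈ Finset.Icc 1 N, if x s = x (s - 1) + 1 then G (x s) else 0)
          + ∑ s ∈ Finset.Icc 1 N, if x s = x (s - 1) + 1 then 0 else J * C (x s) := by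
    intro x
    rw [← Finset.sum_add_distrib]
    refine Finset.sum_congr rfl fun s _ => ?_
    by_cases h : x s = x (s - 1) + 1 <;> simp [h]
  have hcostu : SchemeCost NT NL J C NB u
      = (∑ s ∈ Finset.Icc 1 N, if v s = v (s - 1) + 1 then G (v s) else 0)
        + ∑ s ∈ Finset.Icc 1 N, if v s = v (s - 1) + 1 then 0 else J * C (v s) := by
    rw [← costs v]; rfl
  have hcostw : SchemeCost NT NL J C NB (mlbScheme NT)
      = (∑ s ∈ Finset.Icc 1 N, if w s = w (s - 1) + 1 then G (w s) else 0)
        + ∑ s ∈ Finset.Icc 1 N, if w s = w (s - 1) + 1 then 0 else J * C (w s) := by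
    rw [← costs w]; rfl
  -- the number of non-level-update steps is the same for both schemes
  have ind : ∀ x : ℕ → ℕ,
      (∀ s, 1 ≤ s → s ≤ N → x s = x (s - 1) + 1 ∨ x s = x (s - 1)) →
      (∑ s ∈ Finset.Icc 1 N, if x s = x (s - 1) + 1 then (0 : ℝ) else 1)
        = ((Finset.Icc 1 N).card : ℝ)
          - ∑ ℓ ∈ Finset.Icc (x 0 + 1) (x N), (1 : ℝ) := by
    intro x hx
    have h2 := MLBAux.jump_sum (fun _ => (1 : ℝ)) x N hx
    have h3 : (∑ s ∈ Finset.Icc 1 N, if x s = x (s - 1) + 1 then (0 : ℝ) else 1)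
        + (∑ s ∈ Finset.Icc 1 N, if x s = x (s - 1) + 1 then (1 : ℝ) else 0)
        = ((Finset.Icc 1 N).card : ℝ) := by
      rw [← Finset.sum_add_distrib]
      have hterm : ∀ s ∈ Finset.Icc 1 N,
          (if x s = x (s - 1) + 1 then (0 : ℝ) else 1)
            + (if x s = x (s - 1) + 1 then (1 : ℝ) else 0) = 1 := by
        intro s _; by_cases h : x s = x (s - 1) + 1 <;> simp [h]
      rw [Finset.sum_congr rfl hterm, Finset.sum_const, nsmul_eq_mul, mul_one]
    linarith [h2, h3]
  have hI : (∑ s ∈ Finset.Icc 1 N, if w s = w (s - 1) + 1 then (0 : ℝ) else 1)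
      = ∑ s ∈ Finset.Icc 1 N, if v s = v (s - 1) + 1 then (0 : ℝ) else 1 := by
    rw [ind v hvstep, ind w hwstep, hv0, hvN, hw0, hwN]
  -- mlb's non-level-update part
  have hSw : (∑ s ∈ Finset.Icc 1 N, if w s = w (s - 1) + 1 then 0 else J * C (w s))
      = (J * C 1) * ∑ s ∈ Finset.Icc 1 N, if w s = w (s - 1) + 1 then (0 : ℝ) else 1 := by
    rw [Finset.mul_sum]
    refine Finset.sum_congr rfl fun s hs => ?_
    simp only [Finset.mem_Icc] at hs
    by_cases h : w s = w (s - 1) + 1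
    · simp [h]
    · rw [if_neg h, if_neg h, hwnj s hs.1 h, mul_one]
  -- u's non-level-update part is bounded below
  have hSu : (J * C 1) * (∑ s ∈ Finset.Icc 1 N, if v s = v (s - 1) + 1 then (0 : ℝ) else 1)
      ≤ ∑ s ∈ Finset.Icc 1 N, if v s = v (s - 1) + 1 then 0 else J * C (v s) := by
    rw [Finset.mul_sum]
    refine Finset.sum_le_sum fun s hs => ?_
    simp only [Finset.mem_Icc] at hs
    by_cases h : v s = v (s - 1) + 1
    · simp [h]
    · rw [if_neg h, if_neg h, mul_one]
      have h1 : 1 ≤ v s := by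
        have := MLBAux.step_mono v N hvstep s hs.2 0 (by omega)
        omega
      have h2 : v s ≤ NL := by
        have := MLBAux.step_mono v N hvstep N le_rfl s hs.2
        omega
      have hC : C 1 ≤ C (v s) := hCmono ⟨le_rfl, hNL⟩ ⟨h1, h2⟩ h1
      exact mul_le_mul_of_nonneg_left hC hJ.le
  rw [hcostw, hcostu, MLBAux.jump_sum G v N hvstep, MLBAux.jump_sum G w N hwstep,
    hv0, hvN, hw0, hwN, hSw, hI]
  linarith [hSu]
end

section
/- Let X be a standard Borel space, let μ₀ be a probability measure on X, let 𝒢 : X → ℝᵐ be measurable, and let Γ be a symmetric positive definite real m×m matrix. On a probability space let θ be an X-valued random variable with law μ₀ and let η be an ℝᵐ-valued random variable with the multivariate Gaussian law N(0, Γ), with θ and η independent. Set Y := 𝒢(θ) + η, and define Φ(u; y) := ½ ⟨y − 𝒢(u), Γ⁻¹ (y − 𝒢(u))⟩ and Z(y) := ∫_X exp(−Φ(u; y)) dμ₀(u). Then Z(y) ∈ (0, 1] for every y ∈ ℝᵐ, and for (law of Y)-almost every y ∈ ℝᵐ, the regular conditional distribution of θ given Y = y equals the probability measure whose density with respect to μ₀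 is exp(−Φ(·; y))/Z(y). -/
open MeasureTheory Matrix ProbabilityTheory
open scoped ENNReal

/-!
Given `θ = u`, the observation `Y = 𝒢 u + η` has law `N(𝒢 u, Γ)`, whose Lebesgue density is
`c · exp (-Φ(u; ·))` with `c = ((2π)ᵐ det Γ)^(-1/2)`. Absorbing `c` into the reference measure
`ν = c · Leb`, the joint law of `(θ, Y)` is `μ₀ ⊗ ν.withDensity (exp (-Φ))`. Tonelli on rectangles
rewrites it, with the roles of the coordinates swapped, as `ν.withDensity Z ⊗ posterior`, and the
conditional distribution of `θ` given `Y` is the a.e.-unique kernel with this property.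
-/

lemma MeasureTheory.withDensity_ofReal_const_mul {α : Type*} [MeasurableSpace α] (μ : Measure α)
    {c : ℝ} (hc : 0 ≤ c) (f : α → ℝ) :
    μ.withDensity (fun x => ENNReal.ofReal (c * f x))
      = (ENNReal.ofReal c • μ).withDensity fun x => ENNReal.ofReal (f x) := by
  rw [withDensity_smul_measure, ← withDensity_smul' _ _ ENNReal.ofReal_ne_top]
  congr with x
  rw [Pi.smul_apply, smul_eq_mul, ENNReal.ofReal_mul hc]

lemma MeasureTheory.integral_mem_Ioc_of_forall_mem_Ioc {α : Type*} [MeasurableSpace α]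
    {μ : Measure α} [IsProbabilityMeasure μ] {f : α → ℝ} (hf : AEStronglyMeasurable f μ)
    (h : ∀ x, f x ∈ Set.Ioc 0 1) : ∫ x, f x ∂μ ∈ Set.Ioc 0 1 := by
  have hint : Integrable f μ :=
    .of_bound hf 1 (ae_of_all _ fun x => by rw [Real.norm_of_nonneg (h x).1.le]; exact (h x).2)
  refine ⟨?_, ?_⟩
  · rw [integral_pos_iff_support_of_nonneg (fun x => (h x).1.le) hint]
    simp [Function.support, (h _).1.ne']
  · calc ∫ x, f x ∂μ ≤ ∫ _, 1 ∂μ := integral_mono hint (integrable_const 1) fun x => (h x).2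
      _ = 1 := by simp

lemma Matrix.PosDef.exp_neg_half_dotProduct_inv_mulVec_mem_Ioc {n : Type*} [Fintype n]
    [DecidableEq n] {Γ : Matrix n n ℝ} (hΓ : Γ.PosDef) (v : n → ℝ) :
    Real.exp (-(1 / 2 * (v ⬝ᵥ Γ⁻¹ *ᵥ v))) ∈ Set.Ioc 0 1 := by
  have hq : 0 ≤ v ⬝ᵥ Γ⁻¹ *ᵥ v := by simpa using hΓ.inv.posSemidef.dotProduct_mulVec_nonneg v
  exact ⟨Real.exp_pos _, Real.exp_le_one_iff.2 (neg_nonpos.2 (by positivity))⟩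

section Translation

variable {G : Type*} [MeasurableSpace G] [AddCommGroup G]

lemma MeasureTheory.Measure.map_add_left_withDensity [MeasurableAdd G] (ν : Measure G)
    [ν.IsAddLeftInvariant] (g : G → ℝ≥0∞) (c : G) :
    (ν.withDensity g).map (c + ·) = ν.withDensity fun y => g (y - c) := by
  ext s hs
  rw [Measure.map_apply (measurable_const_add c) hs,
    withDensity_apply _ (measurable_const_add c hs), withDensity_apply _ hs,
    ← (measurePreserving_add_left ν c).setLIntegral_comp_preimage_emb
      (measurableEmbedding_addLeft c) (fun y => g (y - c))]
  simp only [add_sub_cancel_left]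

lemma MeasureTheory.lintegral_sub_right_eq_one [MeasurableAdd G] (ν : Measure G)
    [ν.IsAddLeftInvariant] (g : G → ℝ≥0∞) [IsProbabilityMeasure (ν.withDensity g)] (c : G) :
    ∫⁻ y, g (y - c) ∂ν = 1 := by
  rw [lintegral_sub_right_eq_self, ← setLIntegral_univ, ← withDensity_apply _ .univ, measure_univ]

lemma MeasureTheory.Measure.map_prodMk_add_prod_eq_compProd [MeasurableAdd₂ G]
    {X : Type*} [MeasurableSpace X] (μ : Measure X) [SFinite μ] (N : Measure G) [SFinite N]
    {F : X → G} (hF : Measurable F) (κ : Kernel X G) [IsSFiniteKernel κ]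
    (hκ : ∀ u, κ u = N.map (F u + ·)) :
    (μ.prod N).map (fun p => (p.1, F p.1 + p.2)) = μ ⊗ₘ κ := by
  ext s hs
  have hmap : Measurable fun p : X × G => (p.1, F p.1 + p.2) := by fun_prop
  rw [Measure.map_apply hmap hs, Measure.prod_apply (hmap hs), Measure.compProd_apply hs]
  refine lintegral_congr fun u => ?_
  rw [hκ, Measure.map_apply (measurable_const_add _) (measurable_prodMk_left hs)]
  rfl

end Translation

namespace ProbabilityTheory

lemma Kernel.isMarkovKernel_const_withDensity {α β : Type*} [MeasurableSpace α]
    [MeasurableSpace β] (ν : Measure β) [SFinite ν] {f : α → β → ℝ≥0∞}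
    (hf : Measurable (Function.uncurry f)) (hf_one : ∀ a, ∫⁻ b, f a b ∂ν = 1) :
    IsMarkovKernel ((Kernel.const α ν).withDensity f) :=
  ⟨fun a => ⟨by rw [Kernel.withDensity_apply' _ hf, Measure.restrict_univ, Kernel.const_apply,
    hf_one]⟩⟩

theorem map_prodMk_add_eq_compProd_of_indepFun {G : Type*} [MeasurableSpace G] [AddCommGroup G]
    [MeasurableAdd₂ G] [MeasurableSub₂ G] {Ω X : Type*} [MeasurableSpace Ω] [MeasurableSpace X]
    {P : Measure Ω} [IsProbabilityMeasure P] {θ : Ω → X} {η : Ω → G} (hθ : Measurable θ)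
    (hη : Measurable η) (hind : IndepFun θ η P) {F : X → G} (hF : Measurable F)
    (ν : Measure G) [SFinite ν] [ν.IsAddLeftInvariant] {ℓ : G → ℝ≥0∞} (hℓ : Measurable ℓ)
    (hη_law : P.map η = ν.withDensity ℓ) :
    P.map (fun ω => (θ ω, F (θ ω) + η ω))
      = P.map θ ⊗ₘ (Kernel.const X ν).withDensity fun u y => ℓ (y - F u) := by
  have hL : Measurable (Function.uncurry fun u y => ℓ (y - F u)) := by fun_prop
  have : IsProbabilityMeasure (ν.withDensity ℓ) :=
    hη_law ▸ Measure.isProbabilityMeasure_map hη.aemeasurable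
  have := Kernel.isMarkovKernel_const_withDensity ν hL fun u => lintegral_sub_right_eq_one ν ℓ (F u)
  have hmap : Measurable fun p : X × G => (p.1, F p.1 + p.2) := by fun_prop
  calc P.map (fun ω => (θ ω, F (θ ω) + η ω))
      = (P.map fun ω => (θ ω, η ω)).map fun p => (p.1, F p.1 + p.2) := by
        rw [Measure.map_map hmap (hθ.prodMk hη)]
        rfl
    _ = ((P.map θ).prod (P.map η)).map fun p => (p.1, F p.1 + p.2) := by
        rw [(indepFun_iff_map_prod_eq_prod_map_map hθ.aemeasurable hη.aemeasurable).1 hind]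
    _ = _ := Measure.map_prodMk_add_prod_eq_compProd _ _ hF _ fun u => by
        rw [Kernel.withDensity_apply _ hL, Kernel.const_apply, hη_law,
          Measure.map_add_left_withDensity]

variable {X 𝓨 : Type*} [MeasurableSpace X] [MeasurableSpace 𝓨]

noncomputable def evidence (μ₀ : Measure X) (L : X → 𝓨 → ℝ≥0∞) (y : 𝓨) : ℝ≥0∞ :=
  ∫⁻ u, L u y ∂μ₀

noncomputable def bayesPosterior (μ₀ : Measure X) [SFinite μ₀] (L : X → 𝓨 → ℝ≥0∞) :
    Kernel 𝓨 X :=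
  (Kernel.const 𝓨 μ₀).withDensity fun y u => (evidence μ₀ L y)⁻¹ * L u y

variable {μ₀ : Measure X} {L : X → 𝓨 → ℝ≥0∞}

lemma evidence_ofReal [IsFiniteMeasure μ₀] {f : X → 𝓨 → ℝ}
    (hf : Measurable (Function.uncurry f)) (hf_mem : ∀ u y, f u y ∈ Set.Icc 0 1) (y : 𝓨) :
    evidence μ₀ (fun u y => ENNReal.ofReal (f u y)) y = ENNReal.ofReal (∫ u, f u y ∂μ₀) := by
  have hint : Integrable (fun u => f u y) μ₀ :=
    .of_bound (hf.comp measurable_prodMk_right).aestronglyMeasurable 1 (ae_of_all _ fun u => by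
      rw [Real.norm_of_nonneg (hf_mem u y).1]; exact (hf_mem u y).2)
  exact (ofReal_integral_eq_lintegral_ofReal hint (ae_of_all _ fun u => (hf_mem u y).1)).symm

section SFinite

variable [SFinite μ₀]

lemma measurable_evidence (hL : Measurable (Function.uncurry L)) : Measurable (evidence μ₀ L) :=
  hL.lintegral_prod_left'

lemma measurable_bayesPosterior_density (hL : Measurable (Function.uncurry L)) :
    Measurable (Function.uncurry fun y u => (evidence μ₀ L y)⁻¹ * L u y) :=
  ((measurable_evidence hL).comp measurable_fst).inv.mul (hL.comp measurable_swap)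

lemma bayesPosterior_apply (hL : Measurable (Function.uncurry L)) (y : 𝓨) :
    bayesPosterior μ₀ L y = (evidence μ₀ L y)⁻¹ • μ₀.withDensity fun u => L u y := by
  have hLy : Measurable fun u => L u y := hL.comp measurable_prodMk_right
  rw [bayesPosterior, Kernel.withDensity_apply _ (measurable_bayesPosterior_density hL),
    Kernel.const_apply, ← withDensity_smul _ hLy]
  rfl

lemma isMarkovKernel_bayesPosterior (hL : Measurable (Function.uncurry L))
    (hZ_ne_zero : ∀ y, evidence μ₀ L y ≠ 0) (hZ_ne_top : ∀ y, evidence μ₀ L y ≠ ∞) :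
    IsMarkovKernel (bayesPosterior μ₀ L) :=
  Kernel.isMarkovKernel_const_withDensity μ₀ (measurable_bayesPosterior_density hL) fun y => by
    rw [lintegral_const_mul' _ _ (ENNReal.inv_ne_top.2 (hZ_ne_zero y)), ← evidence,
      ENNReal.inv_mul_cancel (hZ_ne_zero y) (hZ_ne_top y)]

end SFinite

theorem compProd_bayesPosterior_eq_map_swap [IsFiniteMeasure μ₀] (ν : Measure 𝓨) [SFinite ν]
    (hL : Measurable (Function.uncurry L)) (hL_one : ∀ u, ∫⁻ y, L u y ∂ν = 1)
    (hZ_ne_zero : ∀ y, evidence μ₀ L y ≠ 0) (hZ_ne_top : ∀ y, evidence μ₀ L y ≠ ∞) :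
    ν.withDensity (evidence μ₀ L) ⊗ₘ bayesPosterior μ₀ L
      = (μ₀ ⊗ₘ (Kernel.const X ν).withDensity L).map Prod.swap := by
  have := Kernel.isMarkovKernel_const_withDensity ν hL hL_one
  have := isMarkovKernel_bayesPosterior hL hZ_ne_zero hZ_ne_top
  refine (Measure.ext_prod fun {A B} hA hB => ?_).symm
  have hpost (y : 𝓨) : evidence μ₀ L y * bayesPosterior μ₀ L y B = ∫⁻ u in B, L u y ∂μ₀ := by
    rw [bayesPosterior_apply hL, Measure.smul_apply, withDensity_apply _ hB, smul_eq_mul,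
      ← mul_assoc, ENNReal.mul_inv_cancel (hZ_ne_zero y) (hZ_ne_top y), one_mul]
  calc (μ₀ ⊗ₘ (Kernel.const X ν).withDensity L).map Prod.swap (A ×ˢ B)
      = ∫⁻ u in B, ∫⁻ y in A, L u y ∂ν ∂μ₀ := by
        rw [Measure.map_apply measurable_swap (hA.prod hB), Set.preimage_swap_prod,
          Measure.compProd_apply_prod hB hA]
        simp only [Kernel.withDensity_apply' _ hL, Kernel.const_apply]
    _ = ∫⁻ y in A, ∫⁻ u in B, L u y ∂μ₀ ∂ν :=
        (setLIntegral_prod _ hL.aemeasurable).symm.trans (setLIntegral_prod_symm _ hL.aemeasurable)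
    _ = (ν.withDensity (evidence μ₀ L) ⊗ₘ bayesPosterior μ₀ L) (A ×ˢ B) := by
        rw [Measure.compProd_apply_prod hA hB, setLIntegral_withDensity_eq_setLIntegral_mul _
          (measurable_evidence hL) (Kernel.measurable_coe _ hB) hA]
        simp only [Pi.mul_apply, hpost]

theorem condDistrib_ae_eq_bayesPosterior [StandardBorelSpace X] [Nonempty X]
    {Ω : Type*} [MeasurableSpace Ω] {P : Measure Ω} [IsFiniteMeasure P]
    {θ : Ω → X} {Y : Ω → 𝓨} (hθ : Measurable θ) (hY : Measurable Y)
    (ν : Measure 𝓨) [SFinite ν] (hL : Measurable (Function.uncurry L))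
    (hL_one : ∀ u, ∫⁻ y, L u y ∂ν = 1) (hZ_ne_zero : ∀ y, evidence (P.map θ) L y ≠ 0)
    (hZ_ne_top : ∀ y, evidence (P.map θ) L y ≠ ∞)
    (hjoint : P.map (fun ω => (θ ω, Y ω)) = P.map θ ⊗ₘ (Kernel.const X ν).withDensity L) :
    condDistrib θ Y P =ᵐ[P.map Y] bayesPosterior (P.map θ) L := by
  have := isMarkovKernel_bayesPosterior hL hZ_ne_zero hZ_ne_top
  have hbayes := compProd_bayesPosterior_eq_map_swap ν hL hL_one hZ_ne_zero hZ_ne_top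
  have hswap : P.map (fun ω => (Y ω, θ ω)) = (P.map fun ω => (θ ω, Y ω)).map Prod.swap := by
    rw [Measure.map_map measurable_swap (hθ.prodMk hY)]
    rfl
  have hlawY : P.map Y = ν.withDensity (evidence (P.map θ) L) := by
    rw [← Measure.fst_compProd (ν.withDensity _) (bayesPosterior (P.map θ) L), hbayes, ← hjoint,
      ← hswap, Measure.fst_map_prodMk hθ]
  refine condDistrib_ae_eq_of_measure_eq_compProd_of_measurable hY hθ ?_
  rw [hswap, hjoint, ← hbayes, hlawY]

end ProbabilityTheory

/-- Bayes' formula for the Bayesian inverse problem with additive Gaussian noise: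
if `θ ∼ μ₀` and `η ∼ N(0, Γ)` are independent and `Y = 𝒢(θ) + η`, then the model
evidence `Z(y) = ∫ exp(−Φ(u; y)) dμ₀(u)` lies in `(0, 1]` for every `y`, and for
`(law of Y)`-almost every `y` the regular conditional distribution of `θ` given `Y = y`
has `μ₀`-density `exp(−Φ(·; y))/Z(y)`, where
`Φ(u; y) = ½⟨y − 𝒢(u), Γ⁻¹(y − 𝒢(u))⟩`. -/
theorem bayes_formula_gaussian_noise
    {X : Type*} [MeasurableSpace X] [StandardBorelSpace X] [Nonempty X]
    {m : ℕ}
    (μ₀ : Measure X) [IsProbabilityMeasure μ₀]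
    (𝒢 : X → (Fin m → ℝ)) (h𝒢 : Measurable 𝒢)
    (Γ : Matrix (Fin m) (Fin m) ℝ) (hΓ : Γ.PosDef)
    {Ω : Type*} [MeasurableSpace Ω] (P : Measure Ω) [IsProbabilityMeasure P]
    (θ : Ω → X) (η : Ω → (Fin m → ℝ))
    (hθ : Measurable θ) (hη : Measurable η)
    (hlawθ : P.map θ = μ₀)
    (hlawη : P.map η = volume.withDensity (fun v => ENNReal.ofReal
      ((Real.sqrt ((2 * Real.pi) ^ m * Γ.det))⁻¹ *
        Real.exp (-(1 / 2) * (v ⬝ᵥ (Γ⁻¹ *ᵥ v))))))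
    (hindep : ProbabilityTheory.IndepFun θ η P)
    (Y : Ω → (Fin m → ℝ)) (hY : Y = fun ω => 𝒢 (θ ω) + η ω)
    (Φ : X → (Fin m → ℝ) → ℝ)
    (hΦ : Φ = fun u y => (1 / 2) * ((y - 𝒢 u) ⬝ᵥ (Γ⁻¹ *ᵥ (y - 𝒢 u))))
    (Z : (Fin m → ℝ) → ℝ)
    (hZ : Z = fun y => ∫ u, Real.exp (-Φ u y) ∂μ₀) :
    (∀ y, 0 < Z y ∧ Z y ≤ 1) ∧
    (∀ᵐ y ∂(P.map Y),
      ProbabilityTheory.condDistrib θ Y P y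
        = (ENNReal.ofReal (Z y))⁻¹ •
            μ₀.withDensity (fun u => ENNReal.ofReal (Real.exp (-Φ u y)))) := by
  subst hlawθ hY hΦ hZ
  beta_reduce
  simp only [neg_mul] at hlawη
  rw [withDensity_ofReal_const_mul _ (by positivity)] at hlawη
  set ν : Measure (Fin m → ℝ) := ENNReal.ofReal (Real.sqrt ((2 * Real.pi) ^ m * Γ.det))⁻¹ • volume
  set ℓ : (Fin m → ℝ) → ℝ≥0∞ := fun v => ENNReal.ofReal (Real.exp (-(1 / 2 * (v ⬝ᵥ Γ⁻¹ *ᵥ v))))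
  have : IsProbabilityMeasure (ν.withDensity ℓ) :=
    hlawη ▸ Measure.isProbabilityMeasure_map hη.aemeasurable
  have hL : Measurable (Function.uncurry fun u y => ℓ (y - 𝒢 u)) := by fun_prop
  have hmem (u : X) (y : Fin m → ℝ) := hΓ.exp_neg_half_dotProduct_inv_mulVec_mem_Ioc (y - 𝒢 u)
  have hZ (y : Fin m → ℝ) :=
    integral_mem_Ioc_of_forall_mem_Ioc (μ := P.map θ) (by fun_prop) (hmem · y)
  have hevidence (y : Fin m → ℝ) := evidence_ofReal (μ₀ := P.map θ) (by fun_prop)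
    (fun u y => Set.Ioc_subset_Icc_self (hmem u y)) y
  refine ⟨hZ, ?_⟩
  filter_upwards [condDistrib_ae_eq_bayesPosterior hθ (by fun_prop) ν hL
    (fun u => lintegral_sub_right_eq_one ν ℓ (𝒢 u))
    (fun y => (hevidence y).trans_ne (ENNReal.ofReal_pos.2 (hZ y).1).ne')
    (fun y => (hevidence y).trans_ne ENNReal.ofReal_ne_top)
    (map_prodMk_add_eq_compProd_of_indepFun hθ hη hindep h𝒢 ν (by fun_prop) hlawη)] with y hy
  rw [hy, bayesPosterior_apply hL, hevidence]
end
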